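/- For every λ > 1 and every integer n ≥ 0, m_{2n}(λ) = Σ over pairs (i, j) of nonnegative integers with i + j ≤ n of (2n)!/((2i)!(2j)!(2(n−i−j))!) · λ^{2i} · λ^{4j} · m_{2i}(λ³) · m_{2j}(λ³) · m_{2(n−i−j)}(λ³). -/

import Mathlib

/-!
Split the indices `n = 3k + q` by their residue `q` mod 3: since
`λ^{-(3k+q+1)} = λ^{2-q} (λ³)^{-(k+1)}`, the series is `S(λ) = λ A₁ + λ² A₀ + A₂` with
`A_q = ∑ₖ (λ³)^{-(k+1)} X_{3k+q}`. The three blocks of the `X`'s are disjoint, so `A₀, A₁, A₂` are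
independent, and each block is again an i.i.d. Rademacher sequence, so every `A_q` has the law of
`S(λ³)`. Expanding `(λ A₁ + λ² A₀ + A₂)^{2n}` by the binomial theorem twice and taking expectations
factorizes each term into moments of `S(λ³)`; the odd ones vanish because `S(λ³)` is symmetric,
and what is left is the sum over even exponents in the formula.
-/

open MeasureTheory ProbabilityTheory Finset

open scoped ENNReal

section Rademacher

variable {Ω Ω' : Type*} [MeasurableSpace Ω] [MeasurableSpace Ω'] {P : Measure Ω} {Q : Measure Ω'}
  [IsProbabilityMeasure P] [IsProbabilityMeasure Q] {Y : Ω → ℝ} {Z : Ω' → ℝ}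

lemma ae_eq_one_or_eq_neg_one (hY : Measurable Y) (h1 : P {ω | Y ω = 1} = 1 / 2)
    (h2 : P {ω | Y ω = -1} = 1 / 2) : ∀ᵐ ω ∂P, Y ω = 1 ∨ Y ω = -1 := by
  have hdisj : Disjoint {ω | Y ω = 1} {ω | Y ω = -1} :=
    Set.disjoint_left.2 fun ω (ha : Y ω = 1) (hb : Y ω = -1) => by norm_num [ha] at hb
  have hA : MeasurableSet {ω | Y ω = 1} := hY (measurableSet_singleton 1)
  have hB : MeasurableSet {ω | Y ω = -1} := hY (measurableSet_singleton (-1))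
  change ∀ᵐ ω ∂P, ω ∈ {ω | Y ω = 1} ∪ {ω | Y ω = -1}
  rw [ae_mem_iff_measure_eq (hA.union hB).nullMeasurableSet, measure_union hdisj hB, h1, h2,
    ENNReal.add_halves, measure_univ]

lemma map_eq_of_measure_eq_one_half (hY : Measurable Y) (h1 : P {ω | Y ω = 1} = 1 / 2)
    (h2 : P {ω | Y ω = -1} = 1 / 2) :
    P.map Y = (1 / 2 : ℝ≥0∞) • Measure.dirac 1 + (1 / 2 : ℝ≥0∞) • Measure.dirac (-1) := by
  have hsupp : ∀ᵐ x ∂P.map Y, x ∈ ({1} ∪ {-1} : Set ℝ) :=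
    (ae_map_iff hY.aemeasurable (by measurability)).2 (ae_eq_one_or_eq_neg_one hY h1 h2)
  rw [← Measure.restrict_eq_self_of_ae_mem hsupp,
    Measure.restrict_union (by norm_num) (measurableSet_singleton _),
    Measure.restrict_singleton, Measure.restrict_singleton,
    Measure.map_apply hY (measurableSet_singleton _),
    Measure.map_apply hY (measurableSet_singleton _)]
  exact congrArg₂ _ (by rw [← h1]; rfl) (by rw [← h2]; rfl)

lemma identDistrib_of_measure_eq_one_half (hY : Measurable Y) (hZ : Measurable Z)
    (hY1 : P {ω | Y ω = 1} = 1 / 2) (hY2 : P {ω | Y ω = -1} = 1 / 2)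
    (hZ1 : Q {ω | Z ω = 1} = 1 / 2) (hZ2 : Q {ω | Z ω = -1} = 1 / 2) :
    IdentDistrib Y Z P Q where
  aemeasurable_fst := hY.aemeasurable
  aemeasurable_snd := hZ.aemeasurable
  map_eq := by
    rw [map_eq_of_measure_eq_one_half hY hY1 hY2, map_eq_of_measure_eq_one_half hZ hZ1 hZ2]

end Rademacher

section WeightedSeries

variable {α Ω Ω' : Type*} [MeasurableSpace α] [MeasurableSpace Ω] [MeasurableSpace Ω']
  {c : ℕ → ℝ}

lemma summable_mul_of_abs_le_one (hc : Summable c) {x : ℕ → ℝ} (hx : ∀ k, |x k| ≤ 1) :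
    Summable fun k => c k * x k :=
  hc.abs.of_norm_bounded fun k => by
    simpa [abs_mul] using mul_le_of_le_one_right (abs_nonneg (c k)) (hx k)

lemma abs_tsum_mul_le (hc : Summable c) {x : ℕ → ℝ} (hx : ∀ k, |x k| ≤ 1) :
    |∑' k, c k * x k| ≤ ∑' k, |c k| :=
  (norm_tsum_le_tsum_norm (summable_mul_of_abs_le_one hc hx).norm).trans <|
    (summable_mul_of_abs_le_one hc hx).norm.tsum_le_tsum (fun k => by
      simpa [abs_mul] using mul_le_of_le_one_right (abs_nonneg (c k)) (hx k)) hc.abs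

variable {μ : Measure α} {Y : ℕ → α → ℝ}

lemma aemeasurable_tsum_mul (hc : Summable c) (hY : ∀ k, AEMeasurable (Y k) μ)
    (hbdd : ∀ᵐ a ∂μ, ∀ k, |Y k a| ≤ 1) : AEMeasurable (fun a => ∑' k, c k * Y k a) μ :=
  aemeasurable_of_tendsto_metrizable_ae'
    (fun _ => Finset.aemeasurable_fun_sum _ fun k _ => (hY k).const_mul (c k))
    (hbdd.mono fun _ ha => (summable_mul_of_abs_le_one hc ha).hasSum.tendsto_sum_nat)

lemma memLp_top_tsum_mul (hc : Summable c) (hY : ∀ k, AEMeasurable (Y k) μ)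
    (hbdd : ∀ᵐ a ∂μ, ∀ k, |Y k a| ≤ 1) : MemLp (fun a => ∑' k, c k * Y k a) ⊤ μ :=
  memLp_top_of_bound (aemeasurable_tsum_mul hc hY hbdd).aestronglyMeasurable _
    (hbdd.mono fun _ ha => abs_tsum_mul_le hc ha)

lemma aemeasurable_tsum_mul_map (hc : Summable c) (hY : AEMeasurable (fun a k => Y k a) μ)
    (hbdd : ∀ᵐ a ∂μ, ∀ k, |Y k a| ≤ 1) :
    AEMeasurable (fun x : ℕ → ℝ => ∑' k, c k * x k) (μ.map fun a k => Y k a) := by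
  have hmeas : MeasurableSet {x : ℕ → ℝ | ∀ k, |x k| ≤ 1} := by
    simp only [Set.ofPred_forall]
    exact MeasurableSet.iInter fun k => measurableSet_le (by fun_prop) measurable_const
  exact aemeasurable_tsum_mul hc (fun k => (measurable_pi_apply k).aemeasurable)
    ((ae_map_iff hY hmeas).2 hbdd)

lemma ProbabilityTheory.IdentDistrib.tsum_mul {P : Measure Ω} {Q : Measure Ω'} {Y : ℕ → Ω → ℝ}
    {Z : ℕ → Ω' → ℝ} (hc : Summable c)
    (h : IdentDistrib (fun ω k => Y k ω) (fun ω k => Z k ω) P Q)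
    (hbdd : ∀ᵐ ω ∂P, ∀ k, |Y k ω| ≤ 1) :
    IdentDistrib (fun ω => ∑' k, c k * Y k ω) (fun ω => ∑' k, c k * Z k ω) P Q :=
  h.comp_of_aemeasurable (aemeasurable_tsum_mul_map hc h.aemeasurable_fst hbdd)

end WeightedSeries

lemma ProbabilityTheory.iIndepFun.curry {ι κ Ω 𝓧 : Type*} [MeasurableSpace Ω]
    [MeasurableSpace 𝓧] {P : Measure Ω} {X : ι × κ → Ω → 𝓧} (hX : ∀ p, Measurable (X p))
    (h : iIndepFun X P) :
    iIndepFun (fun i ω j => X (i, j) ω) P := by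
  have := h.isProbabilityMeasure
  have _ p := Measure.isProbabilityMeasure_map (μ := P) (hX p).aemeasurable
  rw [iIndepFun_iff_map_fun_eq_infinitePi_map (fun i => by fun_prop)]
  have hcurry : (fun ω i j => X (i, j) ω) = MeasurableEquiv.curry ι κ 𝓧 ∘ fun ω p => X p ω := rfl
  rw [hcurry, ← Measure.map_map (by fun_prop) (by fun_prop), h.map_fun_eq_infinitePi_map hX,
    Measure.infinitePi_map_curry (fun i j => P.map (X (i, j)))]
  congr 1 with i : 1
  exact ((h.precomp (Prod.mk_right_injective i)).map_fun_eq_infinitePi_map fun j => hX _).symm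

structure IsRademacherSeq {Ω : Type*} [MeasurableSpace Ω] (X : ℕ → Ω → ℝ) (P : Measure Ω) :
    Prop where
  measurable : ∀ n, Measurable (X n)
  indep : iIndepFun X P
  measure_eq_one : ∀ n, P {ω | X n ω = 1} = 1 / 2
  measure_eq_neg_one : ∀ n, P {ω | X n ω = -1} = 1 / 2

namespace IsRademacherSeq

variable {Ω Ω' : Type*} [MeasurableSpace Ω] [MeasurableSpace Ω'] {P : Measure Ω} {Q : Measure Ω'}
  {X : ℕ → Ω → ℝ} {Z : ℕ → Ω' → ℝ} {c : ℕ → ℝ}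

lemma ae_abs_le_one (hX : IsRademacherSeq X P) : ∀ᵐ ω ∂P, ∀ k, |X k ω| ≤ 1 :=
  have := hX.indep.isProbabilityMeasure
  ae_all_iff.2 fun k => (ae_eq_one_or_eq_neg_one (hX.measurable k) (hX.measure_eq_one k)
    (hX.measure_eq_neg_one k)).mono fun ω h => by rcases h with h | h <;> simp [h]

lemma comp_injective (hX : IsRademacherSeq X P) {φ : ℕ → ℕ} (hφ : φ.Injective) :
    IsRademacherSeq (fun k => X (φ k)) P where
  measurable k := hX.measurable (φ k)
  indep := hX.indep.precomp hφ
  measure_eq_one k := hX.measure_eq_one (φ k)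
  measure_eq_neg_one k := hX.measure_eq_neg_one (φ k)

lemma neg (hX : IsRademacherSeq X P) : IsRademacherSeq (fun k ω => -X k ω) P where
  measurable k := (hX.measurable k).neg
  indep := hX.indep.comp (fun _ => Neg.neg) fun _ => measurable_neg
  measure_eq_one k := by simpa only [neg_eq_iff_eq_neg] using hX.measure_eq_neg_one k
  measure_eq_neg_one k := by simpa only [neg_inj] using hX.measure_eq_one k

lemma identDistrib (hX : IsRademacherSeq X P) (hZ : IsRademacherSeq Z Q) :
    IdentDistrib (fun ω k => X k ω) (fun ω k => Z k ω) P Q :=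
  have := hX.indep.isProbabilityMeasure
  have := hZ.indep.isProbabilityMeasure
  IdentDistrib.pi (fun k => identDistrib_of_measure_eq_one_half (hX.measurable k)
    (hZ.measurable k) (hX.measure_eq_one k) (hX.measure_eq_neg_one k) (hZ.measure_eq_one k)
    (hZ.measure_eq_neg_one k)) hX.indep hZ.indep

lemma integral_tsum_mul_pow_eq (hX : IsRademacherSeq X P) (hc : Summable c)
    (hZ : IsRademacherSeq Z Q) (r : ℕ) :
    ∫ ω, (∑' k, c k * X k ω) ^ r ∂P = ∫ ω, (∑' k, c k * Z k ω) ^ r ∂Q :=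
  ((hX.identDistrib hZ).tsum_mul hc hX.ae_abs_le_one).comp (measurable_id.pow_const r)
    |>.integral_eq

lemma integral_tsum_mul_pow_of_odd (hX : IsRademacherSeq X P) (hc : Summable c) {r : ℕ}
    (hr : Odd r) : ∫ ω, (∑' k, c k * X k ω) ^ r ∂P = 0 := by
  have h := hX.integral_tsum_mul_pow_eq hc hX.neg r
  simp only [mul_neg, tsum_neg, hr.neg_pow, integral_neg] at h
  linarith

lemma iIndepFun_tsum_blocks (hX : IsRademacherSeq X P) (hc : Summable c) (m : ℕ) [NeZero m] :
    iIndepFun (fun (q : Fin m) ω => ∑' k, c k * X (k * m + q) ω) P := by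
  have hinj : (fun p : Fin m × ℕ => p.2 * m + p.1).Injective :=
    (Nat.divModEquiv m).symm.injective.comp Prod.swap_injective
  have hblock (q : Fin m) : IsRademacherSeq (fun k => X (k * m + q)) P :=
    hX.comp_injective fun a b h => congrArg Prod.snd (@hinj (q, a) (q, b) h)
  exact (hX.indep.precomp hinj |>.curry fun p => hX.measurable _).comp₀ _
    (fun q => (measurable_pi_lambda _ fun k => (hblock q).measurable k).aemeasurable)
    fun q => aemeasurable_tsum_mul_map hc
      (measurable_pi_lambda _ fun k => (hblock q).measurable k).aemeasurable
      (hblock q).ae_abs_le_one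

end IsRademacherSeq

section Moments

variable {Ω : Type*} [MeasurableSpace Ω] {P : Measure Ω}

lemma MeasureTheory.MemLp.pow_top {U : Ω → ℝ} (hU : MemLp U ⊤ P) (r : ℕ) :
    MemLp (fun ω => U ω ^ r) ⊤ P := by
  induction r with
  | zero => simpa using memLp_top_const (μ := P) (1 : ℝ)
  | succ r ih => simpa only [pow_succ] using hU.mul' ih

lemma ProbabilityTheory.IndepFun.integral_add_pow [IsFiniteMeasure P] {U V : Ω → ℝ}
    (hUV : IndepFun U V P) (hU : MemLp U ⊤ P) (hV : MemLp V ⊤ P) (N : ℕ) :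
    ∫ ω, (U ω + V ω) ^ N ∂P =
      ∑ r ∈ range (N + 1), N.choose r * (∫ ω, U ω ^ r ∂P) * ∫ ω, V ω ^ (N - r) ∂P := by
  have hpow (r s : ℕ) : IndepFun (fun ω => U ω ^ r) (fun ω => V ω ^ s) P :=
    hUV.comp (measurable_id.pow_const r) (measurable_id.pow_const s)
  have hint (r s : ℕ) : Integrable (fun ω => U ω ^ r * V ω ^ s) P :=
    (hpow r s).integrable_mul ((hU.pow_top r).integrable le_top)
      ((hV.pow_top s).integrable le_top)
  simp_rw [add_pow]
  rw [integral_finsetSum _ fun r _ => (hint r _).mul_const _]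
  refine sum_congr rfl fun r _ => ?_
  rw [integral_mul_const, (hpow r (N - r)).integral_fun_mul_eq_mul_integral
    (hU.pow_top r).aestronglyMeasurable (hV.pow_top _).aestronglyMeasurable]
  ring

lemma integral_mul_add_mul_add_pow {A : Fin 3 → Ω → ℝ} (hind : iIndepFun A P)
    (hA : ∀ q, MemLp (A q) ⊤ P) {M : ℕ → ℝ} (hM : ∀ q r, ∫ ω, A q ω ^ r ∂P = M r) (a b : ℝ)
    (N : ℕ) :
    ∫ ω, (a * A 1 ω + (b * A 0 ω + A 2 ω)) ^ N ∂P =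
      ∑ r ∈ range (N + 1), N.choose r * (a ^ r * M r) *
        ∑ t ∈ range (N - r + 1), (N - r).choose t * (b ^ t * M t) * M (N - r - t) := by
  have := hind.isProbabilityMeasure
  have hmeas q := (hA q).aestronglyMeasurable.aemeasurable
  have h1 : IndepFun (fun ω => a * A 1 ω) (fun ω => b * A 0 ω + A 2 ω) P :=
    (hind.indepFun_prodMk₀ hmeas 0 2 1 (by decide) (by decide)).symm.comp
      (measurable_const_mul a) (by fun_prop : Measurable fun p : ℝ × ℝ => b * p.1 + p.2)
  have h2 : IndepFun (fun ω => b * A 0 ω) (A 2) P :=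
    (hind.indepFun (by decide : (0 : Fin 3) ≠ 2)).comp (measurable_const_mul b) measurable_id
  rw [h1.integral_add_pow ((hA 1).const_mul a) (((hA 0).const_mul b).add (hA 2))]
  refine sum_congr rfl fun r _ => ?_
  rw [h2.integral_add_pow ((hA 0).const_mul b) (hA 2)]
  simp only [mul_pow, integral_const_mul, hM]

end Moments

section Combinatorics

variable {K : Type*} [Field K] [CharZero K]

lemma cast_choose_mul_choose {N i j : ℕ} (h : i + j ≤ N) :
    (N.choose i : K) * (N - i).choose j =
      N.factorial / (i.factorial * j.factorial * (N - i - j).factorial) := by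
  rw [Nat.cast_choose K (by omega : i ≤ N), Nat.cast_choose K (by omega : j ≤ N - i)]
  have : ((N - i).factorial : K) ≠ 0 := Nat.cast_ne_zero.2 (Nat.factorial_ne_zero _)
  field_simp

lemma sum_range_two_mul_add_one_of_odd {M : Type*} [AddCommMonoid M] {f : ℕ → M}
    (hf : ∀ r, Odd r → f r = 0) (N : ℕ) :
    ∑ r ∈ range (2 * N + 1), f r = ∑ i ∈ range (N + 1), f (2 * i) := by
  induction N with
  | zero => simp
  | succ N ih =>
    rw [show 2 * (N + 1) + 1 = 2 * N + 1 + 1 + 1 by ring, sum_range_succ, sum_range_succ, ih,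
      hf _ (odd_two_mul_add_one N), add_zero, sum_range_succ (n := N + 1)]
    rfl

lemma sum_choose_mul_sum_choose_of_odd {M : ℕ → K} (hM : ∀ r, Odd r → M r = 0) (a b : K)
    (n : ℕ) :
    ∑ r ∈ range (2 * n + 1), (2 * n).choose r * (a ^ r * M r) *
        ∑ t ∈ range (2 * n - r + 1), (2 * n - r).choose t * (b ^ t * M t) * M (2 * n - r - t) =
      ∑ i ∈ range (n + 1), ∑ j ∈ range (n + 1 - i),
        ((2 * n).factorial : K) /
            ((2 * i).factorial * (2 * j).factorial * (2 * (n - i - j)).factorial) *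
          a ^ (2 * i) * b ^ (2 * j) * M (2 * i) * M (2 * j) * M (2 * (n - i - j)) := by
  rw [sum_range_two_mul_add_one_of_odd (fun r hr => by simp [hM r hr]) n]
  refine sum_congr rfl fun i hi => ?_
  have hi : i ≤ n := Nat.lt_succ_iff.1 (mem_range.1 hi)
  rw [show 2 * n - 2 * i = 2 * (n - i) by omega, show n + 1 - i = n - i + 1 by omega,
    sum_range_two_mul_add_one_of_odd (fun t ht => by simp [hM t ht]) (n - i), mul_sum]
  refine sum_congr rfl fun j hj => ?_
  have hj : j ≤ n - i := Nat.lt_succ_iff.1 (mem_range.1 hj)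
  rw [show 2 * (n - i - j) = 2 * n - 2 * i - 2 * j by omega,
    ← cast_choose_mul_choose (by omega : 2 * i + 2 * j ≤ 2 * n),
    show 2 * n - 2 * i = 2 * (n - i) by omega]
  ring

end Combinatorics

section GeometricWeights

lemma tsum_eq_sum_fin_tsum_mul_add {E : Type*} [NormedAddCommGroup E] [CompleteSpace E]
    {f : ℕ → E} (hf : Summable f) (m : ℕ) [NeZero m] :
    ∑' n, f n = ∑ q : Fin m, ∑' k, f (k * m + q) := by
  let e : Fin m × ℕ ≃ ℕ := (Equiv.prodComm _ _).trans (Nat.divModEquiv m).symm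
  have hfe : Summable fun p => f (e p) := hf.comp_injective e.injective
  rw [← e.tsum_eq, hfe.tsum_prod, tsum_fintype]
  rfl

lemma summable_zpow_neg_succ {t : ℝ} (ht : 1 < t) :
    Summable fun k : ℕ => t ^ (-(k + 1 : ℤ)) := by
  refine ((summable_geometric_of_lt_one (inv_nonneg.2 (zero_le_one.trans ht.le))
    (inv_lt_one_of_one_lt₀ ht)).mul_left t⁻¹).congr fun k => ?_
  rw [← pow_succ', inv_pow, ← zpow_natCast, ← zpow_neg]
  push_cast
  rfl

lemma tsum_zpow_mul_eq_sum_fin {l : ℝ} (hl : l ≠ 0) {x : ℕ → ℝ}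
    (hx : Summable fun n : ℕ => l ^ (-(n + 1 : ℤ)) * x n) (m : ℕ) [NeZero m] :
    ∑' n : ℕ, l ^ (-(n + 1 : ℤ)) * x n =
      ∑ q : Fin m, l ^ ((m : ℤ) - 1 - q) * ∑' k : ℕ, (l ^ m) ^ (-(k + 1 : ℤ)) * x (k * m + q) := by
  rw [tsum_eq_sum_fin_tsum_mul_add hx m]
  refine sum_congr rfl fun q _ => ?_
  rw [← tsum_mul_left]
  refine tsum_congr fun k => ?_
  rw [← mul_assoc, ← zpow_natCast, ← zpow_mul, ← zpow_add₀ hl]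
  push_cast
  ring_nf

lemma tsum_zpow_mul_eq_three_blocks {l : ℝ} (hl : 1 < l) {x : ℕ → ℝ} (hx : ∀ k, |x k| ≤ 1) :
    ∑' n : ℕ, l ^ (-(n + 1 : ℤ)) * x n =
      l * ∑' k : ℕ, (l ^ 3) ^ (-(k + 1 : ℤ)) * x (k * 3 + 1) +
        (l ^ 2 * ∑' k : ℕ, (l ^ 3) ^ (-(k + 1 : ℤ)) * x (k * 3) +
          ∑' k : ℕ, (l ^ 3) ^ (-(k + 1 : ℤ)) * x (k * 3 + 2)) := by
  rw [tsum_zpow_mul_eq_sum_fin (by positivity)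
    (summable_mul_of_abs_le_one (summable_zpow_neg_succ hl) hx) 3, Fin.sum_univ_three]
  norm_num
  ring

end GeometricWeights

theorem stmt_10_general {Ω : Type*} [MeasurableSpace Ω] (P : Measure Ω)
    (X : ℕ → Ω → ℝ) (hmeas : ∀ n, Measurable (X n))
    (hindep : iIndepFun X P)
    (h1 : ∀ n, P {ω | X n ω = 1} = 1 / 2) (h2 : ∀ n, P {ω | X n ω = -1} = 1 / 2)
    (S : ℝ → Ω → ℝ)
    (hS : ∀ l : ℝ, 1 < l → ∀ ω, S l ω = ∑' n : ℕ, l ^ (-(n + 1 : ℤ)) * X n ω)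
    (m : ℝ → ℕ → ℝ) (hm : ∀ l k, m l k = ∫ ω, (S l ω) ^ k ∂P)
    (l : ℝ) (hl : 1 < l) (n : ℕ) :
    m l (2 * n) = ∑ i ∈ Finset.range (n + 1), ∑ j ∈ Finset.range (n + 1 - i),
      ((2 * n).factorial : ℝ) /
          (((2 * i).factorial : ℝ) * ((2 * j).factorial : ℝ) * ((2 * (n - i - j)).factorial : ℝ)) *
        l ^ (2 * i) * l ^ (4 * j) *
        m (l ^ 3) (2 * i) * m (l ^ 3) (2 * j) * m (l ^ 3) (2 * (n - i - j)) := by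
  have hX : IsRademacherSeq X P := ⟨hmeas, hindep, h1, h2⟩
  have hl3 : 1 < l ^ 3 := one_lt_pow₀ hl three_ne_zero
  have hc := summable_zpow_neg_succ hl3
  set A : Fin 3 → Ω → ℝ := fun q ω => ∑' k : ℕ, (l ^ 3) ^ (-(k + 1 : ℤ)) * X (k * 3 + q) ω
  have hblock (q : Fin 3) : IsRademacherSeq (fun k => X (k * 3 + q)) P :=
    hX.comp_injective fun a b h => by simpa using h
  have hmoment (q : Fin 3) (r : ℕ) : ∫ ω, A q ω ^ r ∂P = m (l ^ 3) r := by
    rw [hm, (hblock q).integral_tsum_mul_pow_eq hc hX r]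
    simp only [hS _ hl3]
  have hsplit : ∀ᵐ ω ∂P,
      S l ω ^ (2 * n) = (l * A 1 ω + (l ^ 2 * A 0 ω + A 2 ω)) ^ (2 * n) :=
    hX.ae_abs_le_one.mono fun ω hω => by rw [hS l hl, tsum_zpow_mul_eq_three_blocks hl hω]; rfl
  rw [hm, integral_congr_ae hsplit,
    integral_mul_add_mul_add_pow (hX.iIndepFun_tsum_blocks hc 3)
      (fun q => memLp_top_tsum_mul hc (fun k => (hmeas _).aemeasurable) (hblock q).ae_abs_le_one)
      hmoment,
    sum_choose_mul_sum_choose_of_odd (fun r hr => by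
      rw [hm]; simpa only [hS _ hl3] using hX.integral_tsum_mul_pow_of_odd hc hr)]
  exact sum_congr rfl fun i _ => sum_congr rfl fun j _ => by ring

/-- `m_(2n)(λ) = ∑_(i+j≤n) (2n)!/((2i)!(2j)!(2(n-i-j))!) λ^(2i) λ^(4j)
m_(2i)(λ³) m_(2j)(λ³) m_(2(n-i-j))(λ³)`. -/
theorem stmt_10 {Ω : Type*} [MeasurableSpace Ω] (P : Measure Ω) [IsProbabilityMeasure P]
    (X : ℕ → Ω → ℝ) (hmeas : ∀ n, Measurable (X n))
    (hindep : iIndepFun X P)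
    (h1 : ∀ n, P {ω | X n ω = 1} = 1 / 2) (h2 : ∀ n, P {ω | X n ω = -1} = 1 / 2)
    (S : ℝ → Ω → ℝ)
    (hS : ∀ l : ℝ, 1 < l → ∀ ω, S l ω = ∑' n : ℕ, l ^ (-(n + 1 : ℤ)) * X n ω)
    (m : ℝ → ℕ → ℝ) (hm : ∀ l k, m l k = ∫ ω, (S l ω) ^ k ∂P)
    (l : ℝ) (hl : 1 < l) (n : ℕ) :
    m l (2 * n) = ∑ i ∈ Finset.range (n + 1), ∑ j ∈ Finset.range (n + 1 - i),
      ((2 * n).factorial : ℝ) /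
          (((2 * i).factorial : ℝ) * ((2 * j).factorial : ℝ) * ((2 * (n - i - j)).factorial : ℝ)) *
        l ^ (2 * i) * l ^ (4 * j) *
        m (l ^ 3) (2 * i) * m (l ^ 3) (2 * j) * m (l ^ 3) (2 * (n - i - j)) :=
  stmt_10_general P X hmeas hindep h1 h2 S hS m hm l hl n
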